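/- Let G_r be an incidence matrix and x a nonzero vector with sgn(x) = sgn(G_rᵀ G_r x) entrywise. Then the vector v = G_r x is not a scalar multiple of the all-ones vector; moreover there exists a diagonal matrix Λ with positive diagonal entries such that x = Λ G_rᵀ G_r x, and v is an eigenvector of R = G_r Λ G_rᵀ with eigenvalue 1. -/

import Mathlib

open Matrix

/-- `G` is the incidence matrix of a graph: every column is `e_k - e_ℓ`
for some pair of distinct vertices `k, ℓ`. -/
def IsIncidence {q p : ℕ} (G : Matrix (Fin q) (Fin p) ℝ) : Prop :=
  ∀ j : Fin p, ∃ k ℓ : Fin q, k ≠ ℓ ∧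
    ∀ i : Fin q, G i j = (if i = k then 1 else 0) - (if i = ℓ then 1 else 0)

/-
If `x` and `y = Gᵀ G x` have the same sign pattern, then `x = Λ y` for a positive diagonal `Λ`
(take `Λ_ii = x_i / y_i`, and `1` where both vanish). Hence `G x` is fixed by `G Λ Gᵀ`, and
`G x` cannot be constant: the all-ones vector lies in the kernel of `Gᵀ`, so `y = 0`, forcing `x = 0`.
-/

theorem Real.exists_pos_mul_eq_of_sign_eq {a b : ℝ} (h : Real.sign a = Real.sign b) :
    ∃ c, 0 < c ∧ a = c * b := by
  rcases lt_trichotomy b 0 with hb | rfl | hb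
  · have ha : a < 0 := by
      rcases lt_trichotomy a 0 with ha | rfl | ha
      · exact ha
      · norm_num [Real.sign_of_neg hb] at h
      · norm_num [Real.sign_of_neg hb, Real.sign_of_pos ha] at h
    exact ⟨a / b, div_pos_of_neg_of_neg ha hb, (div_mul_cancel₀ a hb.ne).symm⟩
  · exact ⟨1, one_pos, by simpa [Real.sign_eq_zero_iff] using h⟩
  · have ha : 0 < a := by
      rcases lt_trichotomy a 0 with ha | rfl | ha
      · norm_num [Real.sign_of_pos hb, Real.sign_of_neg ha] at h
      · norm_num [Real.sign_of_pos hb] at h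
      · exact ha
    exact ⟨a / b, div_pos ha hb, (div_mul_cancel₀ a hb.ne').symm⟩

theorem IsIncidence.sum_apply_eq_zero {q p : ℕ} {G : Matrix (Fin q) (Fin p) ℝ}
    (hG : IsIncidence G) (j : Fin p) : ∑ i, G i j = 0 := by
  obtain ⟨k, ℓ, -, hcol⟩ := hG j
  simp [hcol, Finset.sum_sub_distrib]

theorem IsIncidence.transpose_mulVec_const {q p : ℕ} {G : Matrix (Fin q) (Fin p) ℝ}
    (hG : IsIncidence G) (c : ℝ) : Gᵀ *ᵥ (fun _ => c) = 0 := by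
  ext j
  simp [mulVec, dotProduct, ← Finset.sum_mul, hG.sum_apply_eq_zero j]

theorem stmt17 {q p : ℕ} (Gr : Matrix (Fin q) (Fin p) ℝ) (hGr : IsIncidence Gr)
    (x : Fin p → ℝ) (hx : x ≠ 0)
    (hsgn : ∀ i, Real.sign (x i) = Real.sign ((Grᵀ.mulVec (Gr.mulVec x)) i)) :
    (¬ ∃ c : ℝ, Gr.mulVec x = fun _ => c) ∧
    ∃ w : Fin p → ℝ, (∀ i, 0 < w i) ∧
      (x = fun i => w i * (Grᵀ.mulVec (Gr.mulVec x)) i) ∧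
      (Gr * diagonal w * Grᵀ).mulVec (Gr.mulVec x) = Gr.mulVec x := by
  choose w hw_pos hw using fun i => Real.exists_pos_mul_eq_of_sign_eq (hsgn i)
  have hx_eq : x = fun i => w i * (Grᵀ *ᵥ (Gr *ᵥ x)) i := funext hw
  refine ⟨?_, w, hw_pos, hx_eq, ?_⟩
  · rintro ⟨c, hc⟩
    apply hx
    rw [hx_eq, hc, hGr.transpose_mulVec_const]
    ext i
    simp
  · have hdiag : diagonal w *ᵥ (Grᵀ *ᵥ (Gr *ᵥ x)) = x := by
      ext i
      rw [mulVec_diagonal, hw]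
    rw [← mulVec_mulVec, ← mulVec_mulVec, hdiag]
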